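/- arXiv:math/0206159 — 5 statements merged into one kernel-verified Lean document; each statement's English description precedes it below -/
import Mathlib

section
/- The number of spanning trees T of the acyclic tournament graph G_d satisfying (a) there are no i < j < k such that both (i,j) and (j,k) are arcs of T, and (b) there are no i < j < k < l such that both (i,k) and (j,l) are arcs of T, equals the (d-1)-st Catalan number C_{d-1} = (1/d) binom(2(d-1), d-1). -/
/-!
Number the vertices `0, …, n`. In a tree with properties (a) and (b) the arc `(0, n)` is present:
a path from `0` to `n` whose first step goes to some `v < n` must, by (a), step down next, and
is then trapped strictly between `0` and `v` by (b). Deleting `(0, n)` leaves the component of `0`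
and that of `n`, and (b) forces them to be intervals `[0, k]` and `[k + 1, n]`. Both pieces are
again trees with (a) and (b), and conversely any two such trees on `[0, k]` and `[k + 1, n]`
together with `(0, n)` form one; this is the Catalan recursion
`C (m + 1) = ∑ k ≤ m, C k * C (m - k)`. Acyclicity comes for free: the two arcs of a cycle between
its least and greatest vertex would both have to be the single edge joining them.
-/

/-- Arcs of the acyclic tournament graph `G_d`: pairs `(i,j)` with `i < j`. -/
abbrev Arc (d : ℕ) := {p : Fin d × Fin d // p.1 < p.2}

/-- The undirected simple graph on `{1,...,d}` underlying a set `T` of arcs of `G_d`. -/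
def treeGraph (d : ℕ) (T : Finset (Arc d)) : SimpleGraph (Fin d) :=
  SimpleGraph.fromEdgeSet {s | ∃ e ∈ T, s = s(e.1.1, e.1.2)}

namespace SimpleGraph

section

variable {V : Type*}

theorem Reachable.or_of_sup_edge {H : SimpleGraph V} {u v x : V}
    (h : (H ⊔ edge u v).Reachable u x) : H.Reachable u x ∨ H.Reachable v x := by
  rw [reachable_iff_reflTransGen] at h
  induction h with
  | refl => exact .inl .rfl
  | tail _ hbc ih =>
    rcases hbc with hbc | hbc
    · exact ih.imp (·.trans hbc.reachable) (·.trans hbc.reachable)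
    · rw [edge_adj] at hbc
      rcases hbc.1 with ⟨-, rfl⟩ | ⟨-, rfl⟩
      · exact .inr .rfl
      · exact .inl .rfl

theorem reachable_comap_iff {W : Type*} {H : SimpleGraph W} {f : V → W} (hf : f.Injective)
    (hrange : ∀ ⦃x y⦄, H.Adj x y → x ∈ Set.range f) {a b : V} :
    (H.comap f).Reachable a b ↔ H.Reachable (f a) (f b) := by
  refine ⟨fun h => h.map (Hom.comap f H), fun ⟨w⟩ => ?_⟩
  suffices ∀ {x y} (w : H.Walk x y) (a b : V), f a = x → f b = y → (H.comap f).Reachable a b from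
    this w a b rfl rfl
  intro x y w
  induction w with
  | nil => rintro a b rfl hb; rw [hf hb]
  | cons h p ih =>
    rintro a b rfl rfl
    obtain ⟨c, rfl⟩ := hrange h.symm
    exact (Adj.reachable (by simpa using h)).trans (ih c b rfl rfl)

end

variable {V : Type*} [LinearOrder V] {G : SimpleGraph V}

variable (G) in
def Alternates : Prop := ∀ ⦃a b c : V⦄, a < b → b < c → G.Adj a b → ¬G.Adj b c

variable (G) in
def Noncrossing : Prop := ∀ ⦃a b c d : V⦄, a < b → b < c → c < d → G.Adj a c → ¬G.Adj b d

namespace Walk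

theorem exists_mem_edges_lt_lt {a b c : V} (w : G.Walk a b) (hc : c ∉ w.support)
    (hac : a < c) (hcb : c < b) : ∃ x y, s(x, y) ∈ w.edges ∧ x < c ∧ c < y := by
  induction w with
  | nil => exact absurd (hac.trans hcb) (lt_irrefl _)
  | @cons u v w h p ih =>
    simp only [support_cons, List.mem_cons, not_or] at hc
    rcases lt_or_gt_of_ne (ne_of_mem_of_not_mem p.start_mem_support hc.2) with hvc | hcv
    · obtain ⟨x, y, he, hx, hy⟩ := ih hc.2 hvc hcb
      exact ⟨x, y, by simp [he], hx, hy⟩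
    · exact ⟨u, v, by simp, hac, hcv⟩

theorem mem_Ioo_of_noncrossing (hG : G.Noncrossing) {a b x y : V} (hab : G.Adj a b)
    (w : G.Walk x y) (ha : a ∉ w.support) (hb : b ∉ w.support) (hx : x ∈ Set.Ioo a b) :
    ∀ z ∈ w.support, z ∈ Set.Ioo a b := by
  induction w with
  | nil => simpa using hx
  | @cons u v w h p ih =>
    simp only [support_cons, List.mem_cons, not_or] at ha hb
    have hva : v ≠ a := ne_of_mem_of_not_mem p.start_mem_support ha.2
    have hvb : v ≠ b := ne_of_mem_of_not_mem p.start_mem_support hb.2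
    have hv : v ∈ Set.Ioo a b := by
      rcases lt_or_gt_of_ne h.ne with huv | hvu
      · refine ⟨hx.1.trans huv, lt_of_le_of_ne (not_lt.1 fun hbv => ?_) hvb⟩
        exact hG hx.1 hx.2 hbv hab h
      · refine ⟨lt_of_le_of_ne (not_lt.1 fun hva' => ?_) hva.symm, hvu.trans hx.2⟩
        exact hG hva' hx.1 hx.2 h.symm hab
    simp only [support_cons, List.forall_mem_cons]
    exact ⟨hx, ih ha.2 hb.2 hv⟩

theorem IsPath.edges_eq_of_mem_Icc (halt : G.Alternates) (hncr : G.Noncrossing) {a b : V}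
    {p : G.Walk a b} (hp : p.IsPath) (hab : a < b) (hI : ∀ z ∈ p.support, z ∈ Set.Icc a b) :
    p.edges = [s(a, b)] := by
  cases p with
  | nil => exact absurd hab (lt_irrefl _)
  | @cons _ v _ h q =>
    rw [cons_isPath_iff] at hp
    have hav : a < v := lt_of_le_of_ne (hI v (by simp)).1 h.ne
    rcases eq_or_ne v b with rfl | hvb
    · simp [(isPath_iff_nil.1 hp.1).eq_nil]
    cases q with
    | nil => exact absurd rfl hvb
    | @cons _ w _ h' r =>
      rw [cons_isPath_iff] at hp
      have hwv : w < v := lt_of_le_of_ne (not_lt.1 fun hvw => halt hav hvw h h') h'.ne.symm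
      have haw : a < w := lt_of_le_of_ne (hI w (by simp)).1 fun haw => hp.2 (by simp [haw])
      have hout := mem_Ioo_of_noncrossing hncr h r (fun ha => hp.2 (by simp [ha])) hp.1.2
        ⟨haw, hwv⟩ b r.end_mem_support
      exact absurd (hout.2.trans_le (hI v (by simp)).2) (lt_irrefl _)

end Walk

open Walk in
theorem Alternates.isAcyclic (halt : G.Alternates) (hncr : G.Noncrossing) : G.IsAcyclic := by
  intro v c hc
  obtain ⟨x, hx, hxmin⟩ := c.support.toFinset.exists_min_image id ⟨v, by simp⟩
  obtain ⟨y, hy, hymax⟩ := c.support.toFinset.exists_max_image id ⟨v, by simp⟩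
  simp only [List.mem_toFinset, id] at hx hy hxmin hymax
  have hxy : x < y := by
    cases c with
    | nil => exact absurd rfl hc.ne_nil
    | @cons _ u _ h q =>
      have hu : u ∈ (cons h q).support := by simp
      rcases lt_or_gt_of_ne h.ne with hvu | huv
      · exact (hxmin v (by simp)).trans_lt (hvu.trans_le (hymax u hu))
      · exact (hxmin u hu).trans_lt (huv.trans_le (hymax v (by simp)))
  have hc' := hc.rotate hx
  set c' := c.rotate x hx
  have hyc' : y ∈ c'.support := (mem_support_rotate_iff c x hx).2 hy
  have hI : ∀ z ∈ c'.support, z ∈ Set.Icc x y := fun z hz =>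
    ⟨hxmin z ((mem_support_rotate_iff c x hx).1 hz), hymax z ((mem_support_rotate_iff c x hx).1 hz)⟩
  have hspec := c'.take_spec hyc'
  have htake := (hc'.isPath_takeUntil hyc').edges_eq_of_mem_Icc halt hncr hxy
    fun z hz => hI z (c'.support_takeUntil_subset_support hyc' hz)
  have hdrop : (c'.dropUntil y hyc').reverse.IsPath :=
    (IsCycle.isPath_of_append_right (not_nil_of_ne hxy.ne) (hspec ▸ hc')).reverse
  have hdrop' := hdrop.edges_eq_of_mem_Icc halt hncr hxy
    fun z hz => hI z (c'.support_dropUntil_subset_support hyc' (by simpa using hz))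
  have hnodup := hc'.edges_nodup
  rw [← hspec, edges_append, ← List.reverse_reverse (c'.dropUntil y hyc').edges, ← edges_reverse,
    htake, hdrop'] at hnodup
  simp at hnodup

namespace Noncrossing

/-- Otherwise the walk from `lo` to `a` crosses over `b` by an edge `x < b < y`, the walk from `b`
to `hi` crosses over `y` by an edge `x' < y < y'`, and `x < b ≤ x'` makes the two edges cross. -/
theorem lt_of_reachable (hG : G.Noncrossing) {lo hi b a : V} (hsep : ¬G.Reachable lo hi)
    (hhi : ∀ z, G.Reachable lo z → z ≤ hi) (hb : G.Reachable hi b)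
    (hbmin : ∀ z, G.Reachable hi z → b ≤ z) (hlo : lo < b) (ha : G.Reachable lo a) : a < b := by
  classical
  by_contra! hba
  have hba' : b < a := lt_of_le_of_ne hba fun h => hsep (ha.trans (h ▸ hb.symm))
  obtain ⟨w⟩ := ha
  obtain ⟨x, y, hxy, hxb, hby⟩ := w.exists_mem_edges_lt_lt
    (fun h => hsep ((w.takeUntil b h).reachable.trans hb.symm)) hlo hba'
  have hy : G.Reachable lo y := (w.takeUntil y (w.snd_mem_support_of_mem_edges hxy)).reachable
  have hyhi : y < hi := lt_of_le_of_ne (hhi y hy) fun h => hsep (h ▸ hy)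
  obtain ⟨w'⟩ := hb.symm
  obtain ⟨x', y', hxy', hx'y, hyy'⟩ := w'.exists_mem_edges_lt_lt
    (fun h => hsep (hy.trans ((w'.takeUntil y h).reachable.symm.trans hb.symm))) hby hyhi
  have hx' : b ≤ x' :=
    hbmin x' (hb.trans (w'.takeUntil x' (w'.fst_mem_support_of_mem_edges hxy')).reachable)
  exact hG (hxb.trans_le hx') hx'y hyy' (w.adj_of_mem_edges hxy) (w'.adj_of_mem_edges hxy')

end Noncrossing

end SimpleGraph

namespace ArcSet

open SimpleGraph

def graph (S : Finset (ℕ × ℕ)) : SimpleGraph ℕ := fromRel fun a b => (a, b) ∈ S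

def Compatible (p q : ℕ × ℕ) : Prop := p.2 ≠ q.1 ∧ ¬(p.1 < q.1 ∧ q.1 < p.2 ∧ p.2 < q.2)

/-- Arcs are pairs `a < b` of naturals, and an `IsNCAltForest n` lives on the vertices
`0, …, n - 1` (the paper's `1, …, n`); `graph S` leaves all other naturals isolated. For `p ≠ q`,
`Compatible p q` is (a) and (b) for the ordered pair `(p, q)`; `Set.Pairwise` imposes both orders. -/
structure IsNCAltForest (n : ℕ) (S : Finset (ℕ × ℕ)) : Prop where
  fst_lt_snd : ∀ p ∈ S, p.1 < p.2
  snd_lt : ∀ p ∈ S, p.2 < n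
  pairwise : (S : Set (ℕ × ℕ)).Pairwise Compatible

structure IsNCAltTree (n : ℕ) (S : Finset (ℕ × ℕ)) : Prop extends IsNCAltForest n S where
  reachable : ∀ v < n, (graph S).Reachable 0 v

variable {n m k : ℕ} {S T : Finset (ℕ × ℕ)}

theorem graph_adj {a b : ℕ} : (graph S).Adj a b ↔ a ≠ b ∧ ((a, b) ∈ S ∨ (b, a) ∈ S) :=
  fromRel_adj ..

theorem graph_mono (h : S ⊆ T) : graph S ≤ graph T := fun _ _ hab => by
  rw [graph_adj] at hab ⊢
  exact ⟨hab.1, hab.2.imp (@h _) (@h _)⟩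

theorem graph_insert (p : ℕ × ℕ) : graph (insert p S) = graph S ⊔ edge p.1 p.2 := by
  ext a b
  simp only [sup_adj, graph_adj, edge_adj, Finset.mem_insert, Prod.ext_iff]
  tauto

namespace IsNCAltForest

theorem mono (h : IsNCAltForest n T) (hST : S ⊆ T) : IsNCAltForest n S :=
  ⟨fun p hp => h.fst_lt_snd p (hST hp), fun p hp => h.snd_lt p (hST hp),
    h.pairwise.mono (Finset.coe_subset.2 hST)⟩

theorem adj_iff (h : IsNCAltForest n S) {a b : ℕ} (hab : a < b) :
    (graph S).Adj a b ↔ (a, b) ∈ S := by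
  rw [graph_adj]
  refine ⟨fun h' => h'.2.resolve_right fun hba => ?_, fun h' => ⟨hab.ne, .inl h'⟩⟩
  exact absurd (h.fst_lt_snd _ hba) hab.not_gt

theorem lt_of_adj (h : IsNCAltForest n S) {a b : ℕ} (hab : (graph S).Adj a b) : b < n := by
  rcases (graph_adj.1 hab).2 with hp | hp
  · exact h.snd_lt _ hp
  · exact (h.fst_lt_snd _ hp).trans (h.snd_lt _ hp)

theorem forall_mem_support_lt (h : IsNCAltForest n S) {a b : ℕ} (w : (graph S).Walk a b)
    (ha : a < n) : ∀ z ∈ w.support, z < n := by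
  induction w with
  | nil => simpa using ha
  | cons hadj p ih =>
    simp only [Walk.support_cons, List.forall_mem_cons]
    exact ⟨ha, ih (h.lt_of_adj hadj)⟩

theorem lt_of_reachable (h : IsNCAltForest n S) {a b : ℕ} (hr : (graph S).Reachable a b)
    (ha : a < n) : b < n :=
  hr.elim fun w => h.forall_mem_support_lt w ha b w.end_mem_support

theorem le_of_mem (h : IsNCAltForest (k + 1) S) : ∀ p ∈ S, p.1 ≤ k ∧ p.2 ≤ k :=
  fun p hp => by have := h.fst_lt_snd p hp; have := h.snd_lt p hp; omega

theorem alternates (h : IsNCAltForest n S) : (graph S).Alternates := by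
  intro a b c hab hbc h₁ h₂
  rw [h.adj_iff hab] at h₁
  rw [h.adj_iff hbc] at h₂
  exact (h.pairwise h₁ h₂ (by simp [hab.ne])).1 rfl

theorem noncrossing (h : IsNCAltForest n S) : (graph S).Noncrossing := by
  intro a b c d hab hbc hcd h₁ h₂
  rw [h.adj_iff (hab.trans hbc)] at h₁
  rw [h.adj_iff (hbc.trans hcd)] at h₂
  exact (h.pairwise h₁ h₂ (by simp [hab.ne])).2 ⟨hab, hbc, hcd⟩

theorem zero_mem_of_reachable (h : IsNCAltForest (n + 1) S) (hn : 0 < n)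
    (hr : (graph S).Reachable 0 n) : (0, n) ∈ S := by
  obtain ⟨p, hp⟩ := hr.exists_isPath
  have hI : ∀ z ∈ p.support, z ∈ Set.Icc 0 n := fun z hz =>
    ⟨z.zero_le, Nat.lt_succ_iff.1 (h.forall_mem_support_lt p (Nat.succ_pos n) z hz)⟩
  have he := hp.edges_eq_of_mem_Icc h.alternates h.noncrossing hn hI
  exact (h.adj_iff hn).1 (p.adj_of_mem_edges (he ▸ List.mem_singleton_self _))

theorem snd_le_or_lt_fst (h : IsNCAltForest n S)
    (hr : ∀ v < n, (graph S).Reachable 0 v ↔ v ≤ k) : ∀ p ∈ S, p.2 ≤ k ∨ k < p.1 := by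
  intro p hp
  have hadj : (graph S).Adj p.1 p.2 := (h.adj_iff (h.fst_lt_snd p hp)).2 hp
  have hp₂ := h.snd_lt p hp
  refine (le_or_gt p.1 k).imp (fun hp₁ => ?_) id
  exact (hr p.2 hp₂).1 (((hr p.1 ((h.fst_lt_snd p hp).trans hp₂)).2 hp₁).trans hadj.reachable)

end IsNCAltForest

theorem reachable_union_iff {P : ℕ → Prop} (hS : ∀ p ∈ S, P p.1 ∧ P p.2)
    (hT : ∀ p ∈ T, ¬P p.1 ∧ ¬P p.2) {u v : ℕ} (hu : P u) :
    (graph (S ∪ T)).Reachable u v ↔ (graph S).Reachable u v := by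
  refine ⟨fun h => ?_, (·.mono (graph_mono Finset.subset_union_left))⟩
  rw [reachable_iff_reflTransGen] at h
  suffices P v ∧ (graph S).Reachable u v from this.2
  induction h with
  | refl => exact ⟨hu, .rfl⟩
  | @tail x y _ hxy ih =>
    obtain ⟨hne, hp | hp⟩ := graph_adj.1 hxy <;> rcases Finset.mem_union.1 hp with hp | hp
    · exact ⟨(hS _ hp).2, ih.2.trans (graph_adj.2 ⟨hne, .inl hp⟩).reachable⟩
    · exact absurd ih.1 (hT _ hp).1
    · exact ⟨(hS _ hp).1, ih.2.trans (graph_adj.2 ⟨hne, .inr hp⟩).reachable⟩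
    · exact absurd ih.1 (hT _ hp).2

def shift (s : ℕ) : ℕ × ℕ ↪ ℕ × ℕ := (addRightEmbedding s).prodMap (addRightEmbedding s)

@[simp] theorem shift_apply (s : ℕ) (p : ℕ × ℕ) : shift s p = (p.1 + s, p.2 + s) := rfl

theorem lt_of_mem_map_shift : ∀ p ∈ S.map (shift (k + 1)), k < p.1 ∧ k < p.2 := by
  simp only [Finset.forall_mem_map, shift_apply]
  omega

theorem map_shift_image_sub {s : ℕ} (hS : ∀ p ∈ S, s ≤ p.1 ∧ s ≤ p.2) :
    (S.image fun p => (p.1 - s, p.2 - s)).map (shift s) = S := by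
  rw [Finset.map_eq_image, Finset.image_image]
  refine (Finset.image_congr fun p hp => ?_).trans S.image_id
  have := hS p hp
  ext <;> simp <;> omega

theorem compatible_shift {s : ℕ} {p q : ℕ × ℕ} :
    Compatible (shift s p) (shift s q) ↔ Compatible p q := by
  simp only [Compatible, shift_apply]
  omega

theorem isNCAltForest_map_shift_iff {s : ℕ} :
    IsNCAltForest (n + s) (S.map (shift s)) ↔ IsNCAltForest n S := by
  have hpw : ((S.map (shift s) : Finset _) : Set (ℕ × ℕ)).Pairwise Compatible ↔
      (S : Set (ℕ × ℕ)).Pairwise Compatible := by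
    rw [Finset.coe_map, (shift s).injective.injOn.pairwise_image]
    simp only [Set.Pairwise, Function.onFun, compatible_shift]
  have h₁ : (∀ p ∈ S.map (shift s), p.1 < p.2) ↔ ∀ p ∈ S, p.1 < p.2 := by
    simp only [Finset.forall_mem_map, shift_apply, add_lt_add_iff_right]
  have h₂ : (∀ p ∈ S.map (shift s), p.2 < n + s) ↔ ∀ p ∈ S, p.2 < n := by
    simp only [Finset.forall_mem_map, shift_apply, add_lt_add_iff_right]
  exact ⟨fun h => ⟨h₁.1 h.1, h₂.1 h.2, hpw.1 h.3⟩, fun h => ⟨h₁.2 h.1, h₂.2 h.2, hpw.2 h.3⟩⟩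

theorem comap_graph_map_shift (s : ℕ) : (graph (S.map (shift s))).comap (· + s) = graph S := by
  ext a b
  simp only [comap_adj, graph_adj, Finset.mem_map, shift_apply, Prod.ext_iff]
  constructor
  · rintro ⟨hne, ⟨p, hp, h₁, h₂⟩ | ⟨p, hp, h₁, h₂⟩⟩
    · exact ⟨by omega, .inl (by rwa [← Nat.add_right_cancel h₁, ← Nat.add_right_cancel h₂])⟩
    · exact ⟨by omega, .inr (by rwa [← Nat.add_right_cancel h₁, ← Nat.add_right_cancel h₂])⟩
  · rintro ⟨hne, h | h⟩
    · exact ⟨by omega, .inl ⟨_, h, rfl, rfl⟩⟩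
    · exact ⟨by omega, .inr ⟨_, h, rfl, rfl⟩⟩

theorem reachable_map_shift_iff {s a b : ℕ} :
    (graph (S.map (shift s))).Reachable (a + s) (b + s) ↔ (graph S).Reachable a b := by
  rw [← reachable_comap_iff (add_left_injective s), comap_graph_map_shift]
  intro x y hxy
  obtain ⟨-, hp | hp⟩ := graph_adj.1 hxy <;> obtain ⟨p, -, hp⟩ := Finset.mem_map.1 hp
  · exact ⟨p.1, congrArg Prod.fst hp⟩
  · exact ⟨p.2, congrArg Prod.snd hp⟩

namespace IsNCAltTree

theorem top_mem (h : IsNCAltTree (m + 2) T) : (0, m + 1) ∈ T :=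
  h.zero_mem_of_reachable m.succ_pos (h.reachable _ (Nat.lt_succ_self _))

theorem exists_reachable_erase_iff (h : IsNCAltTree (m + 2) T) :
    ∃ k ≤ m, ∀ v < m + 2,
      ((graph (T.erase (0, m + 1))).Reachable 0 v ↔ v ≤ k) ∧
      ((graph (T.erase (0, m + 1))).Reachable (m + 1) v ↔ k < v) := by
  classical
  set G := graph (T.erase (0, m + 1))
  have hforest := h.mono (T.erase_subset (0, m + 1))
  have hsep : ¬G.Reachable 0 (m + 1) := fun hr =>
    Finset.notMem_erase _ _ (hforest.zero_mem_of_reachable m.succ_pos hr)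
  have hT : graph T = G ⊔ edge 0 (m + 1) := by
    conv_lhs => rw [← Finset.insert_erase h.top_mem]
    exact graph_insert _
  have hcover : ∀ v < m + 2, G.Reachable 0 v ∨ G.Reachable (m + 1) v := fun v hv =>
    Reachable.or_of_sup_edge (hT ▸ h.reachable v hv)
  have hex : ∃ b, G.Reachable (m + 1) b := ⟨m + 1, .rfl⟩
  have hb := Nat.find_spec hex
  have hbmin : ∀ z, G.Reachable (m + 1) z → Nat.find hex ≤ z := fun z => Nat.find_min' hex
  have hpos : 0 < Nat.find hex :=
    Nat.pos_of_ne_zero fun h0 => hsep (h0 ▸ hb).symm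
  have hlt : ∀ a, G.Reachable 0 a → a < Nat.find hex := fun a =>
    hforest.noncrossing.lt_of_reachable hsep
      (fun z hz => Nat.lt_succ_iff.1 (hforest.lt_of_reachable hz (by omega))) hb hbmin hpos
  have hle := hbmin _ .rfl
  refine ⟨Nat.find hex - 1, by omega, fun v hv => ⟨⟨fun hr => ?_, fun hvk => ?_⟩,
    ⟨fun hr => ?_, fun hkv => ?_⟩⟩⟩
  · have := hlt v hr; omega
  · exact (hcover v hv).resolve_right fun hr => by have := hbmin v hr; omega
  · have := hbmin v hr; omega
  · exact (hcover v hv).resolve_left fun hr => by have := hlt v hr; omega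

end IsNCAltTree

theorem IsNCAltForest.exists_eq_union (h : IsNCAltForest (m + 2) S) (hk : k ≤ m)
    (hr : ∀ v < m + 2,
      ((graph S).Reachable 0 v ↔ v ≤ k) ∧ ((graph S).Reachable (m + 1) v ↔ k < v)) :
    ∃ T₁ T₂, IsNCAltTree (k + 1) T₁ ∧ IsNCAltTree (m - k + 1) T₂ ∧
      S = T₁ ∪ T₂.map (shift (k + 1)) := by
  classical
  have hside := h.snd_le_or_lt_fst fun v hv => (hr v hv).1
  set T₁ := S.filter (·.2 ≤ k)
  set T₂ := (S.filter (k < ·.1)).image fun p => (p.1 - (k + 1), p.2 - (k + 1))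
  have hT₂ : T₂.map (shift (k + 1)) = S.filter (k < ·.1) := map_shift_image_sub fun p hp => by
    have := h.fst_lt_snd p (Finset.mem_of_mem_filter p hp)
    have := (Finset.mem_filter.1 hp).2
    omega
  have hS : S = T₁ ∪ T₂.map (shift (k + 1)) := by
    ext p
    rw [hT₂, Finset.mem_union, Finset.mem_filter, Finset.mem_filter]
    exact ⟨fun hp => (hside p hp).imp (⟨hp, ·⟩) (⟨hp, ·⟩), fun hp => hp.elim (·.1) (·.1)⟩
  have hf₁ : IsNCAltForest (k + 1) T₁ :=
    ⟨fun p hp => h.fst_lt_snd p (Finset.mem_of_mem_filter p hp),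
      fun p hp => Nat.lt_succ_of_le (Finset.mem_filter.1 hp).2,
      (h.mono (Finset.filter_subset _ _)).pairwise⟩
  have hf₂ : IsNCAltForest (m - k + 1) T₂ := by
    rw [← isNCAltForest_map_shift_iff (s := k + 1), show m - k + 1 + (k + 1) = m + 2 by omega, hT₂]
    exact h.mono (Finset.filter_subset _ _)
  have hreach₂ : ∀ v ≤ m - k, (graph T₂).Reachable (m - k) v := by
    intro v hv
    have hr' := (hr (v + (k + 1)) (by omega)).2.2 (by omega)
    rwa [hS, Finset.union_comm, reachable_union_iff (P := (k < ·))
      (fun p hp => lt_of_mem_map_shift p hp)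
      (fun p hp => by have := hf₁.le_of_mem p hp; omega) (by omega),
      show m + 1 = m - k + (k + 1) by omega, reachable_map_shift_iff] at hr'
  refine ⟨T₁, T₂, ⟨hf₁, fun v hv => ?_⟩,
    ⟨hf₂, fun v hv => (hreach₂ 0 (Nat.zero_le _)).symm.trans (hreach₂ v (by omega))⟩, hS⟩
  have hr' := (hr v (by omega)).1.2 (by omega)
  rwa [hS, reachable_union_iff (P := (· ≤ k)) hf₁.le_of_mem
    (fun p hp => by have := lt_of_mem_map_shift p hp; omega) (Nat.zero_le _)] at hr'

def glue (m k : ℕ) (T₁ T₂ : Finset (ℕ × ℕ)) : Finset (ℕ × ℕ) :=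
  insert (0, m + 1) (T₁ ∪ T₂.map (shift (k + 1)))

theorem IsNCAltTree.exists_eq_glue (h : IsNCAltTree (m + 2) T) :
    ∃ k ≤ m, ∃ T₁ T₂, IsNCAltTree (k + 1) T₁ ∧ IsNCAltTree (m - k + 1) T₂ ∧
      T = glue m k T₁ T₂ := by
  obtain ⟨k, hk, hr⟩ := h.exists_reachable_erase_iff
  obtain ⟨T₁, T₂, h₁, h₂, hU⟩ := (h.mono (T.erase_subset _)).exists_eq_union hk hr
  exact ⟨k, hk, T₁, T₂, h₁, h₂, by rw [glue, ← hU, Finset.insert_erase h.top_mem]⟩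

variable {T₁ T₂ : Finset (ℕ × ℕ)}

theorem compatible_of_le_of_lt {p q : ℕ × ℕ} (hp : p.1 ≤ k ∧ p.2 ≤ k) (hq : k < q.1 ∧ k < q.2) :
    Compatible p q ∧ Compatible q p := by
  simp only [Compatible]
  omega

theorem compatible_zero {q : ℕ × ℕ} (hq : q.1 < q.2 ∧ q.2 ≤ n) :
    Compatible (0, n) q ∧ Compatible q (0, n) := by
  simp only [Compatible]
  omega

theorem IsNCAltForest.union_map_shift (hk : k ≤ m) (h₁ : IsNCAltForest (k + 1) T₁)
    (h₂ : IsNCAltForest (m - k + 1) T₂) : IsNCAltForest (m + 2) (T₁ ∪ T₂.map (shift (k + 1))) := by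
  have h₂' := (isNCAltForest_map_shift_iff (s := k + 1)).2 h₂
  rw [show m - k + 1 + (k + 1) = m + 2 by omega] at h₂'
  refine ⟨fun p hp => ?_, fun p hp => ?_, ?_⟩
  · exact (Finset.mem_union.1 hp).elim (h₁.fst_lt_snd p) (h₂'.fst_lt_snd p)
  · exact (Finset.mem_union.1 hp).elim (fun hp => by have := h₁.snd_lt p hp; omega)
      (h₂'.snd_lt p)
  · rw [Finset.coe_union, Set.pairwise_union]
    exact ⟨h₁.pairwise, h₂'.pairwise, fun p hp q hq _ =>
      compatible_of_le_of_lt (h₁.le_of_mem p hp) (lt_of_mem_map_shift q hq)⟩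

theorem IsNCAltForest.insert_zero (h : IsNCAltForest (n + 1) S) (hn : 0 < n) :
    IsNCAltForest (n + 1) (insert (0, n) S) := by
  refine ⟨fun p hp => ?_, fun p hp => ?_, ?_⟩
  · exact (Finset.mem_insert.1 hp).elim (fun hp => hp ▸ hn) (h.fst_lt_snd p)
  · exact (Finset.mem_insert.1 hp).elim (fun hp => hp ▸ n.lt_succ_self) (h.snd_lt p)
  · rw [Finset.coe_insert, Set.pairwise_insert]
    exact ⟨h.pairwise, fun q hq _ => compatible_zero
      ⟨h.fst_lt_snd q hq, Nat.lt_succ_iff.1 (h.snd_lt q hq)⟩⟩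

theorem isNCAltTree_glue (hk : k ≤ m) (h₁ : IsNCAltTree (k + 1) T₁)
    (h₂ : IsNCAltTree (m - k + 1) T₂) : IsNCAltTree (m + 2) (glue m k T₁ T₂) := by
  refine ⟨(h₁.union_map_shift hk h₂.toIsNCAltForest).insert_zero m.succ_pos, fun v hv => ?_⟩
  have hsub₁ : T₁ ⊆ glue m k T₁ T₂ :=
    Finset.subset_union_left.trans (Finset.subset_insert _ _)
  have hsub₂ : T₂.map (shift (k + 1)) ⊆ glue m k T₁ T₂ :=
    Finset.subset_union_right.trans (Finset.subset_insert _ _)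
  rcases le_or_gt v k with hvk | hkv
  · exact (h₁.reachable v (by omega)).mono (graph_mono hsub₁)
  have htop : (graph (glue m k T₁ T₂)).Adj 0 (m + 1) :=
    graph_adj.2 ⟨by omega, .inl (Finset.mem_insert_self _ _)⟩
  have hshift : (graph (T₂.map (shift (k + 1)))).Reachable
      (m - k + (k + 1)) (v - (k + 1) + (k + 1)) :=
    reachable_map_shift_iff.2 ((h₂.reachable _ (by omega)).symm.trans (h₂.reachable _ (by omega)))
  rw [show m - k + (k + 1) = m + 1 by omega, show v - (k + 1) + (k + 1) = v by omega] at hshift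
  exact htop.reachable.trans (hshift.mono (graph_mono hsub₂))

theorem erase_glue (hk : k ≤ m) (h₁ : IsNCAltForest (k + 1) T₁) :
    (glue m k T₁ T₂).erase (0, m + 1) = T₁ ∪ T₂.map (shift (k + 1)) := by
  refine Finset.erase_insert fun hmem => ?_
  rcases Finset.mem_union.1 hmem with hmem | hmem
  · have := (h₁.le_of_mem _ hmem).2; omega
  · have := (lt_of_mem_map_shift _ hmem).1; omega

theorem reachable_union_map_shift_iff (h₁ : IsNCAltTree (k + 1) T₁) {v : ℕ} :
    (graph (T₁ ∪ T₂.map (shift (k + 1)))).Reachable 0 v ↔ v ≤ k := by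
  rw [reachable_union_iff (P := (· ≤ k)) h₁.le_of_mem
    (fun p hp => by have := lt_of_mem_map_shift p hp; omega) (Nat.zero_le _)]
  exact ⟨fun hr => Nat.lt_succ_iff.1 (h₁.lt_of_reachable hr k.succ_pos),
    fun hv => h₁.reachable v (Nat.lt_succ_of_le hv)⟩

theorem filter_union_map_shift_snd_le (h₁ : IsNCAltForest (k + 1) T₁) :
    (T₁ ∪ T₂.map (shift (k + 1))).filter (·.2 ≤ k) = T₁ := by
  rw [Finset.filter_union, Finset.filter_true_of_mem fun p hp => (h₁.le_of_mem p hp).2,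
    Finset.filter_false_of_mem fun p hp => by have := lt_of_mem_map_shift p hp; omega,
    Finset.union_empty]

theorem filter_union_map_shift_lt_fst (h₁ : IsNCAltForest (k + 1) T₁) :
    (T₁ ∪ T₂.map (shift (k + 1))).filter (k < ·.1) = T₂.map (shift (k + 1)) := by
  rw [Finset.filter_union, Finset.filter_false_of_mem fun p hp => by
      have := h₁.le_of_mem p hp; omega,
    Finset.filter_true_of_mem fun p hp => (lt_of_mem_map_shift p hp).1, Finset.empty_union]

theorem glue_inj {k' : ℕ} {T₁' T₂' : Finset (ℕ × ℕ)} (hk : k ≤ m) (hk' : k' ≤ m)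
    (h₁ : IsNCAltTree (k + 1) T₁) (h₁' : IsNCAltTree (k' + 1) T₁')
    (he : glue m k T₁ T₂ = glue m k' T₁' T₂') : k = k' ∧ T₁ = T₁' ∧ T₂ = T₂' := by
  have hU := erase_glue (T₂ := T₂) hk h₁.toIsNCAltForest
  rw [he, erase_glue hk' h₁'.toIsNCAltForest] at hU
  obtain rfl : k = k' := le_antisymm
    ((reachable_union_map_shift_iff h₁').1 (hU ▸ (reachable_union_map_shift_iff h₁).2 le_rfl))
    ((reachable_union_map_shift_iff h₁).1 (hU.symm ▸ (reachable_union_map_shift_iff h₁').2 le_rfl))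
  refine ⟨rfl, ?_, Finset.map_injective (shift (k + 1)) ?_⟩
  · rw [← filter_union_map_shift_snd_le (T₂ := T₂') h₁'.toIsNCAltForest, hU,
      filter_union_map_shift_snd_le h₁.toIsNCAltForest]
  · rw [← filter_union_map_shift_lt_fst (T₂ := T₂') h₁'.toIsNCAltForest, hU,
      filter_union_map_shift_lt_fst h₁.toIsNCAltForest]

instance (n : ℕ) : Finite {T // IsNCAltTree n T} := by
  have hsub : {T | IsNCAltTree n T} ⊆ ((Finset.range n ×ˢ Finset.range n).powerset : Set _) := by
    intro T hT
    rw [Finset.coe_powerset, Set.mem_preimage, Set.mem_powerset_iff]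
    intro p hp
    have := (hT : IsNCAltTree n T).fst_lt_snd p hp
    have := hT.snd_lt p hp
    simp only [Finset.coe_product, Finset.coe_range, Set.mem_prod, Set.mem_Iio]
    omega
  exact ((Finset.finite_toSet _).subset hsub).to_subtype

theorem isNCAltTree_one_iff : IsNCAltTree 1 T ↔ T = ∅ := by
  refine ⟨fun h => Finset.eq_empty_of_forall_notMem fun p hp => ?_, ?_⟩
  · have := h.fst_lt_snd p hp; have := h.snd_lt p hp; omega
  · rintro rfl
    refine ⟨⟨by simp, by simp, by simp⟩, fun v hv => ?_⟩
    obtain rfl : v = 0 := by omega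
    exact .rfl

theorem card_isNCAltTree_one : Nat.card {T // IsNCAltTree 1 T} = 1 := by
  rw [Nat.card_congr (Equiv.subtypeEquivRight fun _ => isNCAltTree_one_iff)]
  exact Nat.card_unique

theorem card_isNCAltTree_add_two (m : ℕ) :
    Nat.card {T // IsNCAltTree (m + 2) T} =
      ∑ k : Fin (m + 1), Nat.card {T // IsNCAltTree (k + 1) T} *
        Nat.card {T // IsNCAltTree (m - k + 1) T} := by
  let F : (Σ k : Fin (m + 1), {T // IsNCAltTree (k + 1) T} × {T // IsNCAltTree (m - k + 1) T}) →
      {T // IsNCAltTree (m + 2) T} :=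
    fun x => ⟨glue m x.1 x.2.1 x.2.2, isNCAltTree_glue (by omega) x.2.1.2 x.2.2.2⟩
  have hF : F.Bijective := by
    refine ⟨fun ⟨k, T₁, T₂⟩ ⟨k', T₁', T₂'⟩ he => ?_, fun ⟨T, hT⟩ => ?_⟩
    · obtain ⟨hk, h₁, h₂⟩ := glue_inj (by omega) (by omega) T₁.2 T₁'.2 (congrArg Subtype.val he)
      obtain rfl := Fin.ext hk
      obtain rfl := Subtype.ext h₁
      obtain rfl := Subtype.ext h₂
      rfl
    · obtain ⟨k, hk, T₁, T₂, h₁, h₂, rfl⟩ := hT.exists_eq_glue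
      exact ⟨⟨⟨k, by omega⟩, ⟨T₁, h₁⟩, ⟨T₂, h₂⟩⟩, rfl⟩
  rw [← Nat.card_congr (Equiv.ofBijective F hF), Nat.card_sigma]
  simp only [Nat.card_prod]

theorem card_isNCAltTree (n : ℕ) : Nat.card {T // IsNCAltTree (n + 1) T} = catalan n := by
  induction n using Nat.strong_induction_on with
  | _ n ih =>
    rcases n with _ | m
    · exact card_isNCAltTree_one.trans catalan_zero.symm
    · rw [card_isNCAltTree_add_two, catalan_succ]
      exact Finset.sum_congr rfl fun k _ => by rw [ih k (by omega), ih (m - k) (by omega)]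

end ArcSet

section

open SimpleGraph ArcSet

variable {d : ℕ}

def arcEmb (d : ℕ) : Arc d ↪ ℕ × ℕ :=
  ⟨fun e => (e.1.1, e.1.2), fun e f h => by
    simp only [Prod.mk.injEq] at h
    exact Subtype.ext (Prod.ext (Fin.ext h.1) (Fin.ext h.2))⟩

@[simp] theorem arcEmb_apply (e : Arc d) : arcEmb d e = ((e.1.1 : ℕ), (e.1.2 : ℕ)) := rfl

theorem treeGraph_eq_comap (T : Finset (Arc d)) :
    treeGraph d T = (graph (T.map (arcEmb d))).comap Fin.val := by
  ext x y
  simp only [treeGraph, fromEdgeSet_adj, Set.mem_ofPred_eq, comap_adj, graph_adj, Finset.mem_map,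
    arcEmb_apply, Prod.ext_iff, Sym2.eq_iff, ne_eq, Fin.val_inj]
  constructor
  · rintro ⟨⟨e, he, ⟨rfl, rfl⟩ | ⟨rfl, rfl⟩⟩, hne⟩
    · exact ⟨hne, .inl ⟨e, he, rfl, rfl⟩⟩
    · exact ⟨hne, .inr ⟨e, he, rfl, rfl⟩⟩
  · rintro ⟨hne, ⟨e, he, rfl, rfl⟩ | ⟨e, he, rfl, rfl⟩⟩
    · exact ⟨⟨e, he, .inl ⟨rfl, rfl⟩⟩, hne⟩
    · exact ⟨⟨e, he, .inr ⟨rfl, rfl⟩⟩, hne⟩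

theorem pairwise_compatible_map_arcEmb_iff (T : Finset (Arc d)) :
    ((T.map (arcEmb d) : Finset (ℕ × ℕ)) : Set (ℕ × ℕ)).Pairwise Compatible ↔
      (¬ ∃ e ∈ T, ∃ f ∈ T, e.1.2 = f.1.1) ∧
      (¬ ∃ e ∈ T, ∃ f ∈ T, e.1.1 < f.1.1 ∧ f.1.1 < e.1.2 ∧ e.1.2 < f.1.2) := by
  rw [Finset.coe_map, (arcEmb d).injective.injOn.pairwise_image]
  constructor
  · intro h
    refine ⟨fun ⟨e, he, f, hf, hef⟩ => ?_, fun ⟨e, he, f, hf, hcross⟩ => ?_⟩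
    · rcases eq_or_ne e f with rfl | hne
      · exact e.2.ne' hef
      · exact (h he hf hne).1 (congrArg Fin.val hef)
    · rcases eq_or_ne e f with rfl | hne
      · exact lt_irrefl _ hcross.1
      · exact (h he hf hne).2 hcross
  · rintro ⟨h₁, h₂⟩ e he f hf -
    exact ⟨fun hef => h₁ ⟨e, he, f, hf, Fin.ext hef⟩, fun hcross => h₂ ⟨e, he, f, hf, hcross⟩⟩

theorem reachable_treeGraph_iff (T : Finset (Arc d)) {x y : Fin d} :
    (treeGraph d T).Reachable x y ↔ (graph (T.map (arcEmb d))).Reachable x y := by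
  rw [treeGraph_eq_comap]
  refine reachable_comap_iff Fin.val_injective fun a b hab => ?_
  obtain ⟨-, hp | hp⟩ := graph_adj.1 hab <;> obtain ⟨e, -, he⟩ := Finset.mem_map.1 hp
  · exact ⟨e.1.1, congrArg Prod.fst he⟩
  · exact ⟨e.1.2, congrArg Prod.snd he⟩

theorem isNCAltTree_map_arcEmb_iff (hd : 1 ≤ d) (T : Finset (Arc d)) :
    IsNCAltTree d (T.map (arcEmb d)) ↔
      (treeGraph d T).IsTree ∧
      (¬ ∃ e ∈ T, ∃ f ∈ T, e.1.2 = f.1.1) ∧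
      (¬ ∃ e ∈ T, ∃ f ∈ T, e.1.1 < f.1.1 ∧ f.1.1 < e.1.2 ∧ e.1.2 < f.1.2) := by
  have hforest : IsNCAltForest d (T.map (arcEmb d)) ↔
      (¬ ∃ e ∈ T, ∃ f ∈ T, e.1.2 = f.1.1) ∧
      (¬ ∃ e ∈ T, ∃ f ∈ T, e.1.1 < f.1.1 ∧ f.1.1 < e.1.2 ∧ e.1.2 < f.1.2) := by
    refine ⟨fun h => (pairwise_compatible_map_arcEmb_iff T).1 h.pairwise,
      fun h => ⟨?_, ?_, (pairwise_compatible_map_arcEmb_iff T).2 h⟩⟩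
    · simp only [Finset.forall_mem_map, arcEmb_apply, Fin.val_fin_lt]
      exact fun e _ => e.2
    · simp only [Finset.forall_mem_map, arcEmb_apply]
      exact fun e _ => e.1.2.2
  rw [isTree_iff, connected_iff_exists_forall_reachable, ← hforest]
  constructor
  · intro h
    refine ⟨⟨⟨⟨0, hd⟩, fun v => (reachable_treeGraph_iff T).2 (h.reachable v v.2)⟩, ?_⟩,
      h.toIsNCAltForest⟩
    rw [treeGraph_eq_comap]
    exact (h.alternates.isAcyclic h.noncrossing).comap (Hom.comap _ _) Fin.val_injective
  · rintro ⟨⟨⟨r, hr⟩, -⟩, h⟩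
    exact ⟨h, fun v hv => (reachable_treeGraph_iff T (x := ⟨0, hd⟩) (y := ⟨v, hv⟩)).1
      ((hr _).symm.trans (hr _))⟩

theorem exists_map_arcEmb_eq {S : Finset (ℕ × ℕ)} (h : IsNCAltForest d S) :
    ∃ T : Finset (Arc d), T.map (arcEmb d) = S := by
  classical
  refine ⟨S.preimage (arcEmb d) (arcEmb d).injective.injOn, ?_⟩
  rw [Finset.map_eq_image, Finset.image_preimage, Finset.filter_true_of_mem fun p hp => ?_]
  have := h.fst_lt_snd p hp
  have := h.snd_lt p hp
  exact ⟨⟨(⟨p.1, by omega⟩, ⟨p.2, by omega⟩), by simpa [Fin.lt_def]⟩, rfl⟩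

end

/-- the number of spanning trees `T` of `G_d` such that
(a) no `i < j < k` has both `(i,j) ∈ T` and `(j,k) ∈ T`, and
(b) no `i < j < k < l` has both `(i,k) ∈ T` and `(j,l) ∈ T`,
equals the `(d-1)`-st Catalan number. -/
theorem card_noncrossing_spanning_trees (d : ℕ) (hd : 1 ≤ d) :
    Nat.card {T : Finset (Arc d) //
      (treeGraph d T).IsTree ∧
      (¬ ∃ e ∈ T, ∃ f ∈ T, e.1.2 = f.1.1) ∧
      (¬ ∃ e ∈ T, ∃ f ∈ T, e.1.1 < f.1.1 ∧ f.1.1 < e.1.2 ∧ e.1.2 < f.1.2)} =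
    catalan (d - 1) := by
  let e : {T : Finset (Arc d) // _} ≃ {S // ArcSet.IsNCAltTree d S} :=
    Equiv.ofBijective (fun T => ⟨T.1.map (arcEmb d), (isNCAltTree_map_arcEmb_iff hd T.1).2 T.2⟩)
      ⟨fun T T' h => Subtype.ext (Finset.map_injective _ (congrArg Subtype.val h)), fun S => by
        obtain ⟨T, hT⟩ := exists_map_arcEmb_eq S.2.toIsNCAltForest
        exact ⟨⟨T, (isNCAltTree_map_arcEmb_iff hd T).1 (hT ▸ S.2)⟩, Subtype.ext hT⟩⟩
  obtain ⟨n, rfl⟩ := Nat.exists_eq_add_of_le' hd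
  rw [Nat.card_congr e, ArcSet.card_isNCAltTree]
  rfl
end

section
/- Let D be a cutset of the acyclic tournament graph G_d corresponding to a partition (V^+, V^-) of the vertex set, and suppose the binomial f_D = x^{u_D^+} - x^{u_D^-} contains some variable x_{i,j} as a term of degree 1 (i.e., one of its two monomials is the single variable x_{i,j}). Then j = i + 1, and (assuming i ∈ V^+) the partition is V^+ = {i, i+2, i+3, ..., d}, V^- = {1, ..., i-1, i+1}. -/
/-- let `D` be the cutset of `G_d` given by the partition `(V⁺, V⁻)`
(`V⁻` the complement of `V⁺`), and suppose the binomial `f_D` has the single variable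
`x_{i,j}` as one of its monomials, i.e. exactly one arc `a = (i,j)` crosses the cut from
`V⁺` to `V⁻` (so in particular `i ∈ V⁺`).  Then `j = i + 1` and
`V⁺ = {i} ∪ {k : k > i+1}` (that is, `V⁺ = {i, i+2, ..., d}` and
`V⁻ = {1, ..., i-1, i+1}`). -/
theorem cutset_with_degree_one_term (d : ℕ) (Vp : Finset (Fin d)) (a : Arc d)
    (hone : {e : Arc d | e.1.1 ∈ Vp ∧ e.1.2 ∉ Vp} = {a}) :
    (a.1.2 : ℕ) = (a.1.1 : ℕ) + 1 ∧
    ∀ k : Fin d, k ∈ Vp ↔ (k = a.1.1 ∨ a.1.2 < k) := by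
  have h := Set.ext_iff.mp hone
  simp only [Set.mem_setOf_eq, Set.mem_singleton_iff] at h
  obtain ⟨⟨i, j⟩, hij⟩ := a
  simp only at *
  have ha : i ∈ Vp ∧ j ∉ Vp := (h ⟨(i, j), hij⟩).mpr rfl
  -- every k > i with k ≠ j is in Vp
  have hgt : ∀ k : Fin d, i < k → k ≠ j → k ∈ Vp := by
    intro k hk hkj
    by_contra hkVp
    have h2 := (h ⟨(i, k), hk⟩).mp ⟨ha.1, hkVp⟩
    apply hkj
    have := congrArg (fun e : Arc d => e.1.2) h2
    simpa using this
  -- no k < i is in Vp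
  have hlt : ∀ k : Fin d, k < i → k ∉ Vp := by
    intro k hk hkVp
    have h2 := (h ⟨(k, j), lt_trans hk hij⟩).mp ⟨hkVp, ha.2⟩
    have : k = i := by
      have := congrArg (fun e : Arc d => e.1.1) h2
      simpa using this
    exact absurd this (ne_of_lt hk)
  -- j = i + 1
  have hji : (j : ℕ) = (i : ℕ) + 1 := by
    by_contra hne
    have hlt' : (i : ℕ) + 1 < (j : ℕ) := lt_of_le_of_ne hij (Ne.symm hne)
    set k : Fin d := ⟨(i : ℕ) + 1, lt_trans hlt' j.isLt⟩ with hkdef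
    have hik : i < k := by simp [hkdef, Fin.lt_def]
    have hkj : k ≠ j := by
      intro hkj'
      exact hne (by rw [← hkj'])
    have hkVp : k ∈ Vp := hgt k hik hkj
    have hkjlt : k < j := by simp [hkdef, Fin.lt_def, hlt']
    have h2 := (h ⟨(k, j), hkjlt⟩).mp ⟨hkVp, ha.2⟩
    have : k = i := by
      have := congrArg (fun e : Arc d => e.1.1) h2
      simpa using this
    simp [hkdef, Fin.ext_iff] at this
  refine ⟨hji, fun k => ⟨?_, ?_⟩⟩
  · intro hkVp
    rcases lt_trichotomy k i with hk | hk | hk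
    · exact absurd hkVp (hlt k hk)
    · exact Or.inl hk
    · right
      rcases eq_or_ne k j with hkj | hkj
      · exact absurd (hkj ▸ hkVp) ha.2
      · have : (i : ℕ) < (k : ℕ) := hk
        have : (j : ℕ) < (k : ℕ) := by
          rw [hji]
          rcases Nat.lt_or_ge ((i : ℕ) + 1) (k : ℕ) with h' | h'
          · exact h'
          · exact absurd (Fin.ext (by omega : (k:ℕ) = (j:ℕ))) hkj
        exact this
  · rintro (rfl | hk)
    · exact ha.1
    · exact hgt k (lt_trans hij hk) (ne_of_gt hk)
end

section
/- Let C = (v_1, v_2, ..., v_p, v_1) be a circuit in G_d of length p ≥ 5 with v_1 the minimal-label vertex and v_2 < v_p. If v_2 > v_3, then there exists an index k with 3 ≤ k ≤ p-1 such that v_1 < v_k < v_2 < v_{k+1}. -/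
/-- let `(v 0, v 1, ..., v (p-1), v 0)` be a circuit of length `p ≥ 5`
(distinct vertices), with `v 0` the minimal-label vertex, `v 1 < v (p-1)`
(i.e. `v_2 < v_p` in 1-indexed notation) and `v 2 < v 1` (i.e. `v_2 > v_3`).  Then there
is an index `k` with `2 ≤ k ≤ p - 2` (1-indexed: `3 ≤ k ≤ p-1`) such that
`v 0 < v k < v 1 < v (k+1)` (1-indexed: `v_1 < v_k < v_2 < v_{k+1}`). -/
theorem circuit_crossing_lemma (p : ℕ) (hp : 5 ≤ p) (v : ℕ → ℕ)
    (hinj : Set.InjOn v (Set.Iio p))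
    (hmin : ∀ k < p, v 0 ≤ v k)
    (h2p : v 1 < v (p - 1)) (h23 : v 2 < v 1) :
    ∃ k, 2 ≤ k ∧ k ≤ p - 2 ∧ v 0 < v k ∧ v k < v 1 ∧ v 1 < v (k + 1) := by
  classical
  set k := Nat.findGreatest (fun k => v k < v 1) (p - 2) with hk
  have h2le : 2 ≤ p - 2 := by omega
  have hk2 : 2 ≤ k := Nat.le_findGreatest h2le h23
  have hkle : k ≤ p - 2 := Nat.findGreatest_le _
  have hkP : v k < v 1 := Nat.findGreatest_spec (P := fun k => v k < v 1) (m := 2) (by omega) h23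
  have hkp : k < p := by omega
  have hv0 : v 0 < v k := by
    rcases lt_or_eq_of_le (hmin k hkp) with h | h
    · exact h
    · exact absurd (hinj (by simp; omega) (by simpa using hkp) h) (by omega)
  refine ⟨k, hk2, hkle, hv0, hkP, ?_⟩
  rcases eq_or_lt_of_le hkle with h | h
  · have : k + 1 = p - 1 := by omega
    rw [this]; exact h2p
  · have hnot : ¬ v (k + 1) < v 1 :=
      Nat.findGreatest_is_greatest (P := fun k => v k < v 1) (n := p - 2) (by omega) (by omega)
    have hne : v (k + 1) ≠ v 1 := fun he =>
      absurd (hinj (by simp; omega) (by simp; omega) he) (by omega)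
    omega
end

section
/- Let C = (v_1, ..., v_p, v_1) be a circuit in G_d of length p ≥ 5, let (v_1, v_2) with v_1 < v_2 be an arc of C minimizing v_2 - v_1 among all arcs of C, suppose v_3 < v_2 and v_1 < v_p, and suppose there is no index q with v_q < v_{q+1} < v_{q+2} (cyclically). Then there exists r with 3 ≤ r ≤ p-1 such that v_r < v_1 < v_2 < v_{r+1}. -/
/-- let `(v 0, ..., v (p-1), v 0)` be a circuit of length `p ≥ 5`
(distinct vertices, indices mod `p`), let the arc `(v 0, v 1)` with `v 0 < v 1` minimize
the label difference among all arcs of the circuit, suppose `v 2 < v 1`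
(i.e. `v_3 < v_2`) and `v 0 < v (p - 1)` (i.e. `v_1 < v_p`), and suppose no three
cyclically consecutive vertices are increasing.  Then there is an `r` with
`2 ≤ r ≤ p - 2` (1-indexed: `3 ≤ r ≤ p-1`) such that
`v r < v 0 < v 1 < v (r+1)` (1-indexed: `v_r < v_1 < v_2 < v_{r+1}`). -/
theorem circuit_crossing_lemma' (p : ℕ) (hp : 5 ≤ p) (v : ℕ → ℕ)
    (hinj : Set.InjOn v (Set.Iio p))
    (h01 : v 0 < v 1)
    (hmindiff : ∀ k < p, v 1 - v 0 ≤ Nat.dist (v ((k + 1) % p)) (v k))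
    (h21 : v 2 < v 1) (h0p : v 0 < v (p - 1))
    (hnoinc : ¬ ∃ q < p, v q < v ((q + 1) % p) ∧ v ((q + 1) % p) < v ((q + 2) % p)) :
    ∃ r, 2 ≤ r ∧ r ≤ p - 2 ∧ v r < v 0 ∧ v 0 < v 1 ∧ v 1 < v (r + 1) := by
  have hne : ∀ a b : ℕ, a < p → b < p → a ≠ b → v a ≠ v b := by
    intro a b ha hb hab h
    exact hab (hinj ha hb h)
  -- v 2 < v 0
  have h2lt0 : v 2 < v 0 := by
    have := hmindiff 1 (by omega)
    simp only [Nat.mod_eq_of_lt (show (2:ℕ) < p by omega), Nat.dist] at this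
    have hne20 := hne 2 0 (by omega) (by omega) (by omega)
    omega
  -- v 1 < v (p-1)
  have h1ltp : v 1 < v (p - 1) := by
    have := hmindiff (p - 1) (by omega)
    have h1 : (p - 1 + 1) % p = 0 := by
      have : p - 1 + 1 = p := by omega
      simp [this]
    rw [h1] at this
    simp only [Nat.dist] at this
    have hne1p := hne 1 (p - 1) (by omega) (by omega) (by omega)
    omega
  -- the set of indices k in [2, p-1) with v k < v 0
  set S : Finset ℕ := (Finset.Ico 2 (p - 1)).filter (fun k => v k < v 0) with hS
  have h2S : 2 ∈ S := by
    simp [hS, Finset.mem_filter, Finset.mem_Ico]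
    constructor
    · omega
    · exact h2lt0
  have hSne : S.Nonempty := ⟨2, h2S⟩
  set r := S.max' hSne with hr
  have hrS : r ∈ S := S.max'_mem hSne
  have hrIco : 2 ≤ r ∧ r < p - 1 ∧ v r < v 0 := by
    have := hrS
    simp [hS, Finset.mem_filter, Finset.mem_Ico] at this
    tauto
  obtain ⟨hr2, hrp, hvr⟩ := hrIco
  have hmax : ∀ k, 2 ≤ k → k < p - 1 → v k < v 0 → k ≤ r := by
    intro k hk1 hk2 hk3
    exact S.le_max' k (by simp [hS, Finset.mem_filter, Finset.mem_Ico]; exact ⟨⟨hk1, hk2⟩, hk3⟩)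
  -- any index after r (up to p-1) has value > v 0
  have habove : ∀ k, r < k → k ≤ p - 1 → v 0 < v k := by
    intro k hk1 hk2
    rcases eq_or_lt_of_le hk2 with h | h
    · rw [h]; omega
    · have hk0 : ¬ v k < v 0 := fun hc => absurd (hmax k (by omega) h hc) (by omega)
      have := hne k 0 (by omega) (by omega) (by omega)
      omega
  -- v (r+1) > v 0
  have hr1 : v 0 < v (r + 1) := habove (r + 1) (by omega) (by omega)
  refine ⟨r, hr2, by omega, hvr, h01, ?_⟩
  by_contra hcon
  push_neg at hcon
  have hne1r1 : v (r + 1) ≠ v 1 := hne (r + 1) 1 (by omega) (by omega) (by omega)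
  have hr1lt1 : v (r + 1) < v 1 := by omega
  -- then r + 1 ≠ p - 1, so r + 2 ≤ p - 1
  have hrne : r + 1 ≠ p - 1 := by
    intro h; rw [h] at hr1lt1; omega
  have hr2le : r + 2 ≤ p - 1 := by omega
  have hr2gt : v 0 < v (r + 2) := habove (r + 2) (by omega) hr2le
  have hd := hmindiff (r + 1) (by omega)
  have hm : (r + 1 + 1) % p = r + 2 := Nat.mod_eq_of_lt (by omega)
  rw [hm] at hd
  simp only [Nat.dist] at hd
  have hner12 : v (r + 1) ≠ v (r + 2) := hne (r + 1) (r + 2) (by omega) (by omega) (by omega)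
  rcases lt_or_gt_of_ne hner12 with h | h
  · -- increasing triple at q = r
    apply hnoinc
    refine ⟨r, by omega, ?_, ?_⟩
    · rw [Nat.mod_eq_of_lt (by omega : r + 1 < p)]; omega
    · rw [Nat.mod_eq_of_lt (by omega : r + 1 < p), Nat.mod_eq_of_lt (by omega : r + 2 < p)]
      omega
  · omega
end

section
/- Let B ⊆ {1,...,n}, M ∈ ℤ^{d×(n-d)}, and consider the partitioned system with basis matrix identity. For a subset σ ⊆ {1,...,n} with complement σ̄ forming a basis, set σ_1, σ_2, σ̄_1, σ̄_2 as the intersections of σ and σ̄ with the non-basic and basic index sets, B_1 = (I_{σ̄_1}, (-M^T)_{σ̄_2}) and N_1 = (I_{σ_1}, (-M^T)_{σ_2}), and suppose B_1 is invertible. Then the reduced cost vector b'_σ = b_σ - N_1^T (B_1^{-1})^T b_{σ̄} satisfies the linear system (M_{σ_1}, I_{σ_2}) b'_σ = b_B, where b = (b_B, 0) with b_N = 0. -/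
/-- Theorem 3.4 of the paper.  Let the columns of the primal matrix
`(M, I)` be indexed by `α ⊕ β` (`α` the non-basic indices, `β` the basic indices `B`),
so the primal matrix is `P = (M, I_β)` and the dual matrix is `D = (I_α, -Mᵀ)`.
Let `σ` be a set of column indices whose complement `σ̄` forms a basis of the dual
problem: the submatrix `B₁` of `D` on the columns `σ̄` is square (`|σ̄| = |α|`) and
invertible (its columns are linearly independent).  Let `b = (b_B, 0)` (`b_N = 0`), and
let `y = (B₁⁻¹)ᵀ b_σ̄`, i.e. `B₁ᵀ y = b_σ̄`.  Then the reduced cost vector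
`b'_σ = b_σ - N₁ᵀ y` solves the linear system `(M_{σ₁}, I_{σ₂}) b'_σ = b_B`. -/
theorem reduced_cost_solves_standard_pair_system
    {α β : Type*} [Fintype α] [Fintype β] [DecidableEq α] [DecidableEq β]
    (M : Matrix β α ℚ) (σ : Finset (α ⊕ β)) (bB : β → ℚ) (y : α → ℚ)
    -- primal matrix `P = (M, I)` and dual matrix `D = (I, -Mᵀ)`:
    (P : Matrix β (α ⊕ β) ℚ) (hP : P = fun r => Sum.elim (fun a => M r a) (fun b' => if b' = r then 1 else 0))
    (D : Matrix α (α ⊕ β) ℚ) (hD : D = fun a => Sum.elim (fun a' => if a' = a then 1 else 0) (fun b' => -(M b' a)))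
    -- `b = (b_B, 0)`:
    (b : α ⊕ β → ℚ) (hb : b = Sum.elim (0 : α → ℚ) bB)
    -- `B₁` (the submatrix of `D` with columns `σ̄`) is square and invertible:
    (hsquare : σᶜ.card = Fintype.card α)
    (hindep : LinearIndependent ℚ (fun j : {x // x ∈ σᶜ} => fun a => D a j.1))
    -- `y = (B₁⁻¹)ᵀ b_σ̄`, i.e. `B₁ᵀ y = b_σ̄`:
    (hy : ∀ j ∈ σᶜ, ∑ a, D a j * y a = b j) :
    -- `(M_{σ₁}, I_{σ₂}) (b_σ - N₁ᵀ y) = b_B`: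
    ∀ r : β, ∑ e ∈ σ, P r e * (b e - ∑ a, D a e * y a) = bB r := by
  intro r
  have hzero : ∀ e ∈ Finset.univ, e ∉ σ → P r e * (b e - ∑ a, D a e * y a) = 0 := by
    intro e _ he
    have : ∑ a, D a e * y a = b e := hy e (Finset.mem_compl.mpr he)
    rw [this, sub_self, mul_zero]
  rw [Finset.sum_subset (Finset.subset_univ σ) hzero]
  have key : ∑ e, P r e * (b e - ∑ a, D a e * y a)
      = (∑ e, P r e * b e) - ∑ a, (∑ e, P r e * D a e) * y a := by
    simp_rw [mul_sub, Finset.sum_sub_distrib, Finset.mul_sum, Finset.sum_mul]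
    congr 1
    rw [Finset.sum_comm]
    exact Finset.sum_congr rfl fun e _ => Finset.sum_congr rfl fun a _ => by ring
  rw [key]
  have h1 : ∑ e, P r e * b e = bB r := by
    subst hP hb
    rw [Fintype.sum_sum_type]
    simp
  have h2 : ∀ a, ∑ e, P r e * D a e = 0 := by
    intro a
    subst hP hD
    rw [Fintype.sum_sum_type]
    simp
  simp [h1, h2]
end
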